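/- arXiv:2312.09162 — 8 statements merged into one kernel-verified Lean document; each statement's English description precedes it below -/
import Mathlib

section
/- For all integers c ≥ 2, c · C(2c-1, c) ≤ (c+1) · 2^(2c-3). -/
theorem stmt1 (c : ℕ) (hc : 2 ≤ c) :
    c * Nat.choose (2 * c - 1) c ≤ (c + 1) * 2 ^ (2 * c - 3) := by
  induction c, hc using Nat.le_induction with
  | base => decide
  | succ c hc ih =>
    -- goal: (c+1) * choose (2*(c+1)-1) (c+1) ≤ (c+2) * 2^(2*(c+1)-3)
    have h1 : 2 * (c + 1) - 1 = 2 * c + 1 := by omega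
    have h3 : 2 * (c + 1) - 3 = (2 * c - 3) + 2 := by omega
    rw [h1, h3]
    have key1 : Nat.choose (2 * c + 1) (c + 1) * (c + 1) = (2 * c + 1) * Nat.choose (2 * c) c := by
      rw [← Nat.add_one_mul_choose_eq]
    have key2 : Nat.choose (2 * c) c * c = 2 * c * Nat.choose (2 * c - 1) c := by
      have h2c : 2 * c = (2 * c - 1) + 1 := by omega
      have hsym : Nat.choose (2 * c - 1) (c - 1) = Nat.choose (2 * c - 1) c := by
        rw [← Nat.choose_symm (by omega)]
        congr 1
        omega
      have hc1 : c = (c - 1) + 1 := by omega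
      calc Nat.choose (2 * c) c * c
          = Nat.choose ((2*c-1)+1) ((c-1)+1) * ((c-1)+1) := by rw [← h2c, ← hc1]
        _ = ((2*c-1)+1) * Nat.choose (2*c-1) (c-1) := by rw [← Nat.add_one_mul_choose_eq]
        _ = 2 * c * Nat.choose (2 * c - 1) c := by rw [hsym, ← h2c]
    have hpos : 0 < c * (c + 1) := by positivity
    refine Nat.le_of_mul_le_mul_right ?_ hpos
    calc (c + 1) * Nat.choose (2 * c + 1) (c + 1) * (c * (c + 1))
        = ((Nat.choose (2 * c + 1) (c + 1) * (c + 1)) * c) * (c + 1) := by ring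
      _ = (((2 * c + 1) * Nat.choose (2 * c) c) * c) * (c + 1) := by rw [key1]
      _ = (2 * c + 1) * (Nat.choose (2 * c) c * c) * (c + 1) := by ring
      _ = (2 * c + 1) * (2 * c * Nat.choose (2 * c - 1) c) * (c + 1) := by rw [key2]
      _ = (2 * (2 * c + 1) * (c + 1)) * (c * Nat.choose (2 * c - 1) c) := by ring
      _ ≤ (2 * (2 * c + 1) * (c + 1)) * ((c + 1) * 2 ^ (2 * c - 3)) :=
          Nat.mul_le_mul_left _ ih
      _ ≤ (4 * (c + 2) * c) * ((c + 1) * 2 ^ (2 * c - 3)) := by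
          apply Nat.mul_le_mul_right
          nlinarith
      _ = (c + 2) * 2 ^ ((2 * c - 3) + 2) * (c * (c + 1)) := by ring
end

section
/- Let t = 2c-1 with c ≥ 2 and let n ≥ t+1. Then (2c-1)·2^(n-2) − 2^(n-2c)·c·C(2c-1, c) ≥ (3/4)·(2c-2)·2^(n-2). Equivalently in integers: 4·((2c-1)·2^(n-2) − 2^(n-2c)·c·C(2c-1,c)) ≥ 3·(2c-2)·2^(n-2). -/
lemma keyIdent (c : ℕ) :
    (c + 1) * ((c + 1) * Nat.choose (2 * c + 2) (c + 1)) =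
      (2 * c + 1) * (2 * c + 2) * Nat.choose (2 * c) c := by
  have h1 := Nat.add_one_mul_choose_eq (2 * c + 1) c
  have h2 := Nat.add_one_mul_choose_eq (2 * c) c
  have h3 := Nat.choose_symm_half c
  -- h1 : (2c+2) * C(2c+1,c) = C(2c+2,c+1) * (c+1)
  -- h2 : (2c+1) * C(2c,c) = C(2c+1,c+1) * (c+1)
  try simp only [Nat.succ_eq_add_one] at h1 h2
  rw [h3] at h2
  calc (c + 1) * ((c + 1) * Nat.choose (2 * c + 2) (c + 1))
      = (c + 1) * (Nat.choose (2 * c + 1 + 1) (c + 1) * (c + 1)) := by ring_nf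
    _ = (c + 1) * ((2 * c + 1 + 1) * Nat.choose (2 * c + 1) c) := by rw [h1]
    _ = (2 * c + 2) * (Nat.choose (2 * c + 1) c * (c + 1)) := by ring
    _ = (2 * c + 2) * ((2 * c + 1) * Nat.choose (2 * c) c) := by rw [h2]
    _ = (2 * c + 1) * (2 * c + 2) * Nat.choose (2 * c) c := by ring

lemma keyL (c : ℕ) (hc : 1 ≤ c) :
    c * Nat.choose (2 * c) c ≤ (c + 1) * 4 ^ (c - 1) := by
  induction c with
  | zero => omega
  | succ m ih =>
    rcases Nat.eq_or_lt_of_le hc with h | h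
    · simp [← h]
    · have hm : 1 ≤ m := by omega
      have IH := ih hm
      have key := keyIdent m
      have hmul : (m * (m + 1)) * ((m + 1) * Nat.choose (2 * (m + 1)) (m + 1)) ≤
          (m * (m + 1)) * ((m + 1 + 1) * 4 ^ (m + 1 - 1)) := by
        have e1 : (m * (m + 1)) * ((m + 1) * Nat.choose (2 * (m + 1)) (m + 1)) =
            m * ((2 * m + 1) * (2 * m + 2) * Nat.choose (2 * m) m) := by
          rw [← key]; ring_nf
        rw [e1]
        have e2 : m * ((2 * m + 1) * (2 * m + 2) * Nat.choose (2 * m) m) =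
            ((2 * m + 1) * (2 * m + 2)) * (m * Nat.choose (2 * m) m) := by ring
        rw [e2]
        calc ((2 * m + 1) * (2 * m + 2)) * (m * Nat.choose (2 * m) m)
            ≤ ((2 * m + 1) * (2 * m + 2)) * ((m + 1) * 4 ^ (m - 1)) :=
              Nat.mul_le_mul_left _ IH
          _ ≤ (4 * m * (m + 2)) * ((m + 1) * 4 ^ (m - 1)) := by
              apply Nat.mul_le_mul_right; nlinarith
          _ = (m * (m + 1)) * ((m + 1 + 1) * (4 * 4 ^ (m - 1))) := by ring
          _ = (m * (m + 1)) * ((m + 1 + 1) * 4 ^ (m + 1 - 1)) := by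
              congr 2
              rw [← pow_succ']
              congr 1
              omega
      exact Nat.le_of_mul_le_mul_left hmul (by positivity)

theorem stmt6 (c n : ℕ) (hc : 2 ≤ c) (hn : 2 * c ≤ n) :
    4 * ((2 * c - 1) * 2 ^ (n - 2) - 2 ^ (n - 2 * c) * (c * Nat.choose (2 * c - 1) c)) ≥
      3 * ((2 * c - 2) * 2 ^ (n - 2)) := by
  have hdouble : 2 * Nat.choose (2 * c - 1) c = Nat.choose (2 * c) c := by
    have h1 : Nat.choose (2 * c) c = Nat.choose (2 * c - 1) (c - 1) + Nat.choose (2 * c - 1) c := by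
      have : 2 * c = (2 * c - 1) + 1 := by omega
      rw [this]
      have : c = (c - 1) + 1 := by omega
      rw [this, Nat.choose_succ_succ]
      congr 1
    have h2 : Nat.choose (2 * c - 1) (c - 1) = Nat.choose (2 * c - 1) c := by
      rw [← Nat.choose_symm (by omega : c ≤ 2 * c - 1)]
      congr 1
      omega
    omega
  have hkey := keyL c (by omega)
  -- 4 * c * C(2c-1,c) = 2c * C(2c,c) ≤ 2(c+1) * 4^(c-1) = (2c+2) * 2^(2c-2)
  have h4 : 4 * (c * Nat.choose (2 * c - 1) c) ≤ (2 * c + 2) * 2 ^ (2 * c - 2) := by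
    have e : 4 * (c * Nat.choose (2 * c - 1) c) = 2 * (c * (2 * Nat.choose (2 * c - 1) c)) := by
      ring
    rw [e, hdouble]
    have e2 : (4 : ℕ) ^ (c - 1) = 2 ^ (2 * c - 2) := by
      rw [show (4 : ℕ) = 2 ^ 2 by norm_num, ← pow_mul]
      congr 1
      omega
    calc 2 * (c * Nat.choose (2 * c) c) ≤ 2 * ((c + 1) * 4 ^ (c - 1)) :=
          Nat.mul_le_mul_left _ hkey
      _ = (2 * c + 2) * 2 ^ (2 * c - 2) := by rw [e2]; ring
  have hpow : 2 ^ (n - 2) = 2 ^ (n - 2 * c) * 2 ^ (2 * c - 2) := by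
    rw [← pow_add]
    congr 1
    omega
  -- show 4Y + Z ≤ 4X
  have main : 4 * (2 ^ (n - 2 * c) * (c * Nat.choose (2 * c - 1) c)) +
      3 * ((2 * c - 2) * 2 ^ (n - 2)) ≤ 4 * ((2 * c - 1) * 2 ^ (n - 2)) := by
    rw [hpow]
    have lhs1 : 4 * (2 ^ (n - 2 * c) * (c * Nat.choose (2 * c - 1) c)) =
        2 ^ (n - 2 * c) * (4 * (c * Nat.choose (2 * c - 1) c)) := by ring
    rw [lhs1]
    have step : 2 ^ (n - 2 * c) * (4 * (c * Nat.choose (2 * c - 1) c)) ≤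
        2 ^ (n - 2 * c) * ((2 * c + 2) * 2 ^ (2 * c - 2)) :=
      Nat.mul_le_mul_left _ h4
    have rhs : 3 * ((2 * c - 2) * (2 ^ (n - 2 * c) * 2 ^ (2 * c - 2))) +
        2 ^ (n - 2 * c) * ((2 * c + 2) * 2 ^ (2 * c - 2)) ≤
        4 * ((2 * c - 1) * (2 ^ (n - 2 * c) * 2 ^ (2 * c - 2))) := by
      have : 3 * (2 * c - 2) + (2 * c + 2) ≤ 4 * (2 * c - 1) := by omega
      calc 3 * ((2 * c - 2) * (2 ^ (n - 2 * c) * 2 ^ (2 * c - 2))) +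
            2 ^ (n - 2 * c) * ((2 * c + 2) * 2 ^ (2 * c - 2))
          = (3 * (2 * c - 2) + (2 * c + 2)) * (2 ^ (n - 2 * c) * 2 ^ (2 * c - 2)) := by ring
        _ ≤ (4 * (2 * c - 1)) * (2 ^ (n - 2 * c) * 2 ^ (2 * c - 2)) :=
            Nat.mul_le_mul_right _ this
        _ = 4 * ((2 * c - 1) * (2 ^ (n - 2 * c) * 2 ^ (2 * c - 2))) := by ring
    omega
  omega
end

section
/- Let t = 2c with c ≥ 2 and let n ≥ t+1. Then 2c·2^(n-2) − 2^(n-2c-1)·c·C(2c,c) ≥ (3/4)·(2c-2)·2^(n-2), equivalently 4·(2c·2^(n-2) − 2^(n-2c-1)·c·C(2c,c)) ≥ 3·(2c-2)·2^(n-2). -/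
lemma aux_cb (k : ℕ) : (k + 3) * Nat.centralBinom (k + 3) ≤ (k + 6) * 4 ^ (k + 2) := by
  induction k with
  | zero => decide
  | succ k ih =>
    have h : (k + 3 + 1) * Nat.centralBinom (k + 3 + 1)
        = 2 * (2 * (k + 3) + 1) * Nat.centralBinom (k + 3) :=
      Nat.succ_mul_centralBinom_succ (k + 3)
    have key : (k + 3) * ((k + 1 + 3) * Nat.centralBinom (k + 1 + 3))
        ≤ (k + 3) * ((k + 1 + 6) * 4 ^ (k + 1 + 2)) := by
      calc (k + 3) * ((k + 1 + 3) * Nat.centralBinom (k + 1 + 3))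
          = (2 * (2 * (k + 3) + 1)) * ((k + 3) * Nat.centralBinom (k + 3)) := by
            have : k + 1 + 3 = k + 3 + 1 := by omega
            rw [this, h]; ring
        _ ≤ (2 * (2 * (k + 3) + 1)) * ((k + 6) * 4 ^ (k + 2)) :=
            Nat.mul_le_mul_left _ ih
        _ = ((4 * k + 14) * (k + 6)) * 4 ^ (k + 2) := by ring
        _ ≤ ((k + 3) * ((k + 1 + 6) * 4)) * 4 ^ (k + 2) := by
            apply Nat.mul_le_mul_right; nlinarith
        _ = (k + 3) * ((k + 1 + 6) * 4 ^ (k + 1 + 2)) := by ring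
    exact Nat.le_of_mul_le_mul_left key (by omega)

lemma aux_cb2 (c : ℕ) (hc : 1 ≤ c) :
    c * Nat.centralBinom c ≤ (c + 3) * 4 ^ (c - 1) := by
  match c, hc with
  | 1, _ => decide
  | 2, _ => decide
  | (k + 3), _ =>
    have := aux_cb k
    simpa using this

theorem stmt7 (c n : ℕ) (hc : 2 ≤ c) (hn : 2 * c + 1 ≤ n) :
    4 * (2 * c * 2 ^ (n - 2) - 2 ^ (n - 2 * c - 1) * (c * Nat.choose (2 * c) c)) ≥
      3 * ((2 * c - 2) * 2 ^ (n - 2)) := by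
  have hC : Nat.choose (2 * c) c = Nat.centralBinom c := rfl
  set a := 2 ^ (n - 3) with ha_def
  have h1 : 2 ^ (n - 2) = 2 * a := by
    rw [ha_def, ← pow_succ']
    congr 1
    omega
  have h4 : (4 : ℕ) ^ (c - 1) = 2 ^ (2 * c - 2) := by
    rw [show (4 : ℕ) = 2 ^ 2 from rfl, ← pow_mul]
    congr 1
    omega
  have h2 : 2 ^ (n - 2 * c - 1) * (c * Nat.centralBinom c) ≤ c * a + 3 * a := by
    calc 2 ^ (n - 2 * c - 1) * (c * Nat.centralBinom c)
        ≤ 2 ^ (n - 2 * c - 1) * ((c + 3) * 4 ^ (c - 1)) :=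
          Nat.mul_le_mul_left _ (aux_cb2 c (by omega))
      _ = (c + 3) * (2 ^ (n - 2 * c - 1) * 2 ^ (2 * c - 2)) := by rw [h4]; ring
      _ = (c + 3) * a := by
          rw [← pow_add, ha_def]
          congr 2
          omega
      _ = c * a + 3 * a := by ring
  have e1 : 2 * c * (2 * a) = 4 * (c * a) := by ring
  obtain ⟨m, rfl⟩ : ∃ m, c = m + 2 := ⟨c - 2, by omega⟩
  have e2 : (2 * (m + 2) - 2) * (2 * a) = 4 * ((m + 2) * a) - 4 * a := by
    have : 2 * (m + 2) - 2 = 2 * m + 2 := by omega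
    rw [this, show 4 * ((m + 2) * a) = (2 * m + 2) * (2 * a) + 4 * a by ring]
    omega
  have ha : a ≤ (m + 2) * a := Nat.le_mul_of_pos_left _ (by omega)
  rw [hC, h1, e1, e2]
  generalize (m + 2) * a = u at *
  generalize 2 ^ (n - 2 * (m + 2) - 1) * ((m + 2) * Nat.centralBinom (m + 2)) = B at *
  omega
end

section
/- For integers n ≥ 3 and 2 ≤ k ≤ n-1, (2^n − 2^(n-k)) · ∑_{k'=0}^{k} C(k, k')·C(n-k-1, k-k') ≥ (3/2) · 2^(n-1) · C(n-1, k). -/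
theorem stmt8 (n k : ℕ) (hn : 3 ≤ n) (hk : 2 ≤ k) (hkn : k ≤ n - 1) :
    2 * ((2 ^ n - 2 ^ (n - k)) *
        ∑ k' ∈ Finset.range (k + 1), Nat.choose k k' * Nat.choose (n - k - 1) (k - k')) ≥
      3 * (2 ^ (n - 1) * Nat.choose (n - 1) k) := by
  have hsum : ∑ k' ∈ Finset.range (k + 1),
      Nat.choose k k' * Nat.choose (n - k - 1) (k - k') = Nat.choose (n - 1) k := by
    have h1 : n - 1 = k + (n - k - 1) := by omega
    rw [h1, Nat.add_choose_eq, Finset.Nat.sum_antidiagonal_eq_sum_range_succ_mk]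
  rw [hsum]
  have h2 : 2 ^ (n - k) ≤ 2 ^ (n - 2) := Nat.pow_le_pow_right (by norm_num) (by omega)
  have h3 : 2 ^ n = 4 * 2 ^ (n - 2) := by
    rw [show (4:ℕ) = 2 ^ 2 from rfl, ← pow_add]; congr 1; omega
  have h4 : 2 ^ (n - 1) = 2 * 2 ^ (n - 2) := by
    rw [show (2:ℕ) * 2 ^ (n-2) = 2 ^ (1 + (n-2)) from by rw [pow_add]; ring]
    congr 1; omega
  have h5 : 3 * 2 ^ (n - 2) ≤ 2 ^ n - 2 ^ (n - k) := by omega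
  calc 3 * (2 ^ (n - 1) * Nat.choose (n - 1) k)
      = 2 * ((3 * 2 ^ (n - 2)) * Nat.choose (n - 1) k) := by rw [h4]; ring
    _ ≤ 2 * ((2 ^ n - 2 ^ (n - k)) * Nat.choose (n - 1) k) := by
        gcongr
end

section
/- For all integers t ≥ 1, ∑_{v : Fin t → Bool} min(|{i : v i = true}|, t − |{i : v i = true}|) = t·2^(t-1) − ⌈t/2⌉·C(t, ⌊t/2⌋). (Equivalently, for t = 2c−1 this equals (2c−1)·2^(2c−2) − c·C(2c−1, c), and for t = 2c it equals 2c·2^(2c−1) − c·C(2c, c).) -/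
open Finset

private lemma tel_nat (f : ℕ → ℕ) (h : ∀ i, f (i+1) ≤ f i) (n : ℕ) :
    ∑ i ∈ range n, (f i - f (i+1)) = f 0 - f n := by
  induction n with
  | zero => simp
  | succ n ih =>
    have h1 := h n
    have h2 : f n ≤ f 0 := (antitone_nat_of_succ_le h) (Nat.zero_le n)
    rw [Finset.sum_range_succ, ih]
    omega

private lemma aux1 (m k : ℕ) (hk : k ≤ m) :
    (m + 1 - k) * (m+1).choose k = (m+1) * m.choose k := by
  have h1 : (m+1).choose (m+1-k) = (m+1).choose k := Nat.choose_symm (by omega)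
  have h2 : m + 1 - k = (m - k) + 1 := by omega
  have h3 := Nat.add_one_mul_choose_eq m (m-k)
  have h4 : m.choose (m - k) = m.choose k := Nat.choose_symm hk
  rw [← h1, h2]
  rw [h2] at h1
  rw [h4] at h3
  rw [mul_comm]
  exact h3.symm

private lemma S1 (t : ℕ) (ht : 1 ≤ t) :
    ∑ k ∈ range (t + 1), t.choose k * k = t * 2 ^ (t - 1) := by
  obtain ⟨m, rfl⟩ : ∃ m, t = m + 1 := ⟨t - 1, by omega⟩
  rw [Finset.sum_range_succ']
  simp only [Nat.mul_zero, add_zero]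
  have hpt : ∀ i ∈ range (m+1), (m+1).choose (i+1) * (i+1) = (m+1) * m.choose i := by
    intro i _
    exact (Nat.add_one_mul_choose_eq m i).symm
  rw [Finset.sum_congr rfl hpt, ← Finset.mul_sum, Nat.sum_range_choose]
  simp

private lemma choose_mono_half (n : ℕ) : ∀ b a : ℕ, a ≤ b → b ≤ n / 2 → n.choose a ≤ n.choose b := by
  intro b
  induction b with
  | zero =>
    intro a h1 _
    have : a = 0 := by omega
    simp [this]
  | succ b ih =>
    intro a h1 h2
    rcases Nat.lt_or_ge a (b+1) with h | h
    · exact le_trans (ih a (by omega) (by omega))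
        (Nat.choose_le_succ_of_lt_half_left (by omega))
    · have : a = b + 1 := by omega
      simp [this]

private lemma choose_succ_le (n r : ℕ) (hr : n / 2 ≤ r) : n.choose (r+1) ≤ n.choose r := by
  by_cases h : r + 1 ≤ n
  · have h1 : n.choose (n - (r+1)) = n.choose (r+1) := Nat.choose_symm h
    rcases Nat.lt_or_ge (n - r) (n / 2 + 1) with h2 | h2
    · have h3 : n.choose (n - r) = n.choose r := Nat.choose_symm (by omega)
      rw [← h1, ← h3]
      exact choose_mono_half n (n - r) (n - (r+1)) (by omega) (by omega)
    · have hodd : r + 1 = n - r := by omega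
      rw [hodd, Nat.choose_symm (by omega)]
  · rw [Nat.choose_eq_zero_of_lt (by omega)]
    exact Nat.zero_le _

private lemma S2 (t : ℕ) (ht : 1 ≤ t) :
    ∑ k ∈ range (t + 1), t.choose k * (k - (t - k)) = ((t+1)/2) * t.choose (t/2) := by
  set m := t / 2 with hm
  rw [Finset.range_eq_Ico,
    ← Finset.sum_Ico_consecutive _ (by omega : (0:ℕ) ≤ m+1) (by omega : m+1 ≤ t+1)]
  have hz : ∑ k ∈ Ico 0 (m+1), t.choose k * (k - (t-k)) = 0 := by
    apply Finset.sum_eq_zero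
    intro k hk
    simp only [Finset.mem_Ico] at hk
    have : k - (t - k) = 0 := by omega
    simp [this]
  rw [hz, zero_add]
  have hpt : ∀ k ∈ Ico (m+1) (t+1),
      t.choose k * (k - (t-k)) = t * (t-1).choose (k-1) - t * (t-1).choose k := by
    intro k hk
    simp only [Finset.mem_Ico] at hk
    obtain ⟨j, rfl⟩ : ∃ j, k = j + 1 := ⟨k - 1, by omega⟩
    obtain ⟨s, rfl⟩ : ∃ s, t = s + 1 := ⟨t - 1, by omega⟩
    have e1 : (s+1).choose (j+1) * (j+1) = (s+1) * s.choose j :=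
      (Nat.add_one_mul_choose_eq s j).symm
    have e2 : (s+1).choose (j+1) * ((s+1) - (j+1)) = (s+1) * s.choose (j+1) := by
      by_cases hj : j + 1 ≤ s
      · rw [mul_comm]; exact aux1 s (j+1) hj
      · have hj1 : j + 1 = s + 1 ∨ s + 1 < j + 1 := by omega
        rcases hj1 with h | h
        · rw [h]; simp [Nat.choose_eq_zero_of_lt (by omega : s < s + 1)]
        · rw [Nat.choose_eq_zero_of_lt h, Nat.choose_eq_zero_of_lt (by omega)]
          simp
    calc (s+1).choose (j+1) * ((j+1) - ((s+1) - (j+1)))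
        = (s+1).choose (j+1) * (j+1) - (s+1).choose (j+1) * ((s+1) - (j+1)) :=
          Nat.mul_sub_left_distrib _ _ _
      _ = (s+1) * s.choose j - (s+1) * s.choose (j+1) := by rw [e1, e2]
      _ = (s+1) * (s+1-1).choose (j+1-1) - (s+1) * (s+1-1).choose (j+1) := by simp
  rw [Finset.sum_congr rfl hpt, Finset.sum_Ico_eq_sum_range]
  have hre : ∀ i ∈ range (t + 1 - (m+1)),
      t * (t-1).choose (m + 1 + i - 1) - t * (t-1).choose (m + 1 + i)
      = (fun j => t * (t-1).choose (m + j)) i - (fun j => t * (t-1).choose (m + j)) (i+1) := by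
    intro i _
    have h1 : m + 1 + i - 1 = m + i := by omega
    have h2 : m + 1 + i = m + (i + 1) := by omega
    rw [h1, h2]
  rw [Finset.sum_congr rfl hre, tel_nat _ ?anti]
  case anti =>
    intro i
    apply Nat.mul_le_mul_left
    have : m + (i+1) = (m + i) + 1 := by omega
    rw [this]
    exact choose_succ_le (t-1) (m+i) (by omega)
  simp only [add_zero]
  have hlast : (t-1).choose (m + (t + 1 - (m+1))) = 0 :=
    Nat.choose_eq_zero_of_lt (by omega)
  rw [hlast, Nat.mul_zero, Nat.sub_zero]
  -- t * (t-1).choose m = ((t+1)/2) * t.choose m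
  obtain ⟨s, rfl⟩ : ∃ s, t = s + 1 := ⟨t - 1, by omega⟩
  have h1 : (s + 1 - m) * (s+1).choose m = (s+1) * s.choose m := aux1 s m (by omega)
  have h2 : (s + 1 - m) = (s + 1 + 1) / 2 := by omega
  simp only [Nat.add_sub_cancel]
  rw [← h2]
  exact h1.symm

theorem stmt14 (t : ℕ) (ht : 1 ≤ t) :
    ∑ v : Fin t → Bool,
        min (Finset.univ.filter fun i => v i = true).card
            (t - (Finset.univ.filter fun i => v i = true).card) =
      t * 2 ^ (t - 1) - ((t + 1) / 2) * Nat.choose t (t / 2) := by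
  classical
  have hred : ∑ v : Fin t → Bool,
        min (Finset.univ.filter fun i => v i = true).card
            (t - (Finset.univ.filter fun i => v i = true).card)
      = ∑ k ∈ range (t+1), t.choose k * min k (t - k) := by
    let e : (Fin t → Bool) ≃ Finset (Fin t) :=
      { toFun := fun v => Finset.univ.filter fun i => v i = true
        invFun := fun s i => decide (i ∈ s)
        left_inv := fun v => by
          funext i
          by_cases h : v i = true <;> simp [h]
        right_inv := fun s => by ext i; simp }
    have h1 : ∑ v : Fin t → Bool,
        min (Finset.univ.filter fun i => v i = true).card
            (t - (Finset.univ.filter fun i => v i = true).card)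
        = ∑ s : Finset (Fin t), min s.card (t - s.card) :=
      Fintype.sum_equiv e _ _ (fun v => rfl)
    rw [h1, ← Finset.powerset_univ,
      Finset.sum_powerset_apply_card (f := fun c => min c (t - c))]
    simp only [Finset.card_univ, Fintype.card_fin, smul_eq_mul]
  rw [hred]
  have hpt : ∀ k ∈ range (t+1),
      t.choose k * min k (t - k) = t.choose k * k - t.choose k * (k - (t - k)) := by
    intro k hk
    clear hred
    have h : min k (t - k) = k - (k - (t - k)) := by omega
    rw [h, Nat.mul_sub_left_distrib]
  rw [Finset.sum_congr rfl hpt,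
    Finset.sum_tsub_distrib _ (fun k _ => Nat.mul_le_mul_left _ (Nat.sub_le _ _)),
    S1 t ht, S2 t ht]
end

section
/- For n ≥ 3 and 2 ≤ k ≤ n−1, consider the problem family T^{k,n} consisting of t = C(n−1,k)·2^k input CPTs (for each k-element parent set P ⊆ {V_1,…,V_{n−1}} and each context γ over P, one CPT voting 1≻0 exactly on γ and 0≻1 elsewhere), and encode each input CPT as a boolean function on {0,1}^(n−1) taking value 1 exactly on the 2^(n−k−1) swaps consistent with its context γ; then the total number of 1-entries across all inputs is C(n−1,k)·2^k·2^(n−k−1) = 2^(n−1)·C(n−1,k), and on each swap strictly fewer than half of the inputs vote 1. -/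
lemma fiber_sum (m k : ℕ) (P : Finset (Fin m)) :
    ∑ γ : {i // i ∈ P} → Bool,
      (Finset.univ.filter fun o : Fin m → Bool =>
        ∀ i : {i // i ∈ P}, o i = γ i).card = 2 ^ m := by
  have h := Finset.card_eq_sum_card_fiberwise
    (f := fun o : Fin m → Bool => fun i : {i // i ∈ P} => o i)
    (s := Finset.univ) (t := Finset.univ) (fun x _ => Finset.mem_univ _)
  have : ∀ γ : {i // i ∈ P} → Bool,
      (Finset.univ.filter fun o : Fin m → Bool =>
        ∀ i : {i // i ∈ P}, o i = γ i) =
      (Finset.univ.filter fun o : Fin m → Bool =>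
        (fun i : {i // i ∈ P} => o i) = γ) := by
    intro γ; apply Finset.filter_congr; intro o _
    simp [funext_iff]
  rw [Finset.sum_congr rfl fun γ _ => by rw [this γ]]
  rw [← h]
  simp [Finset.card_univ]

theorem stmt15 (n k : ℕ) (hn : 3 ≤ n) (hk : 2 ≤ k) (hkn : k ≤ n - 1) :
    (∑ P ∈ Finset.univ.powersetCard k (α := Fin (n - 1)),
        ∑ γ : {i // i ∈ P} → Bool,
          (Finset.univ.filter fun o : Fin (n - 1) → Bool =>
            ∀ i : {i // i ∈ P}, o i = γ i).card =
      2 ^ (n - 1) * Nat.choose (n - 1) k) ∧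
    (∀ o : Fin (n - 1) → Bool,
      2 * ∑ P ∈ Finset.univ.powersetCard k (α := Fin (n - 1)),
            (Finset.univ.filter fun γ : {i // i ∈ P} → Bool =>
              ∀ i : {i // i ∈ P}, o i = γ i).card <
        Nat.choose (n - 1) k * 2 ^ k) := by
  constructor
  · rw [Finset.sum_congr rfl fun P _ => fiber_sum (n - 1) k P]
    simp [Finset.card_powersetCard, Finset.card_univ, mul_comm]
  · intro o
    have hone : ∀ P : Finset (Fin (n - 1)),
        (Finset.univ.filter fun γ : {i // i ∈ P} → Bool =>
          ∀ i : {i // i ∈ P}, o i = γ i).card = 1 := by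
      intro P
      have : (Finset.univ.filter fun γ : {i // i ∈ P} → Bool =>
          ∀ i : {i // i ∈ P}, o i = γ i) = {fun i : {i // i ∈ P} => o i.1} := by
        ext γ
        simp [funext_iff, eq_comm]
      rw [this, Finset.card_singleton]
    rw [Finset.sum_congr rfl fun P _ => hone P]
    simp only [Finset.sum_const, smul_eq_mul, mul_one,
      Finset.card_powersetCard, Finset.card_univ, Fintype.card_fin]
    have hc : 0 < Nat.choose (n - 1) k := Nat.choose_pos hkn
    calc 2 * Nat.choose (n - 1) k = Nat.choose (n - 1) k * 2 := mul_comm _ _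
      _ < Nat.choose (n - 1) k * 2 ^ k := by
          have h2 : 2 < 2 ^ k := calc 2 < 4 := by norm_num
            _ = 2 ^ 2 := by norm_num
            _ ≤ 2 ^ k := Nat.pow_le_pow_right (by norm_num) hk
          exact mul_lt_mul_of_pos_left h2 hc
end

section
/- For every ε > 0 there exists n ≥ 3 such that 2·(2^(n−1) − 1) > (2 − ε)·2^(n−1). Consequently, in the family T^{n−1,n} (where the best input CPT has objective value 2·(2^(n−1) − 1) = 2(t−1) with t = 2^(n−1), and the optimal solution has value t = 2^(n−1)), the approximation ratio of outputting the best input CPT exceeds 2 − ε. -/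
theorem stmt17 (ε : ℝ) (hε : 0 < ε) :
    ∃ n : ℕ, 3 ≤ n ∧ 2 * ((2 : ℝ) ^ (n - 1) - 1) > (2 - ε) * 2 ^ (n - 1) := by
  obtain ⟨N, hN⟩ := pow_unbounded_of_one_lt (2 / ε) (by norm_num : (1:ℝ) < 2)
  refine ⟨N + 3, by omega, ?_⟩
  have h1 : (2:ℝ) ^ N ≤ 2 ^ (N + 3 - 1) := by
    apply pow_le_pow_right₀ (by norm_num); omega
  have h2 : 2 / ε < 2 ^ (N + 3 - 1) := lt_of_lt_of_le hN h1
  have h3 : 2 < ε * 2 ^ (N + 3 - 1) := by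
    rw [div_lt_iff₀ hε] at h2; linarith [h2]
  nlinarith [pow_pos (by norm_num : (0:ℝ) < 2) (N + 3 - 1)]
end

section
/- Let t ≥ 3 and n ≥ t+1, and set c = ⌈t/2⌉. Define Opt(n,t) = t·2^(n−2) − 2^(n−t−1)·c·C(t, ⌊t/2⌋) and In(n,t) = (t−1)·2^(n−2). Then 3·In(n,t) ≤ 4·Opt(n,t). -/
lemma central_le_pow (t : ℕ) (ht : 9 ≤ t) : Nat.choose t (t / 2) * 4 ≤ 2 ^ t := by
  induction t, ht using Nat.le_induction with
  | base => decide
  | succ t ht ih =>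
    obtain ⟨k, hk⟩ : ∃ k, (t + 1) / 2 = k + 1 := ⟨(t + 1) / 2 - 1, by omega⟩
    have h1 : Nat.choose (t + 1) ((t + 1) / 2) = Nat.choose t k + Nat.choose t (k + 1) := by
      rw [hk, Nat.choose_succ_succ']
    have h2 : Nat.choose t k ≤ Nat.choose t (t / 2) := Nat.choose_le_middle k t
    have h3 : Nat.choose t (k + 1) ≤ Nat.choose t (t / 2) := Nat.choose_le_middle (k + 1) t
    calc Nat.choose (t + 1) ((t + 1) / 2) * 4
        ≤ (2 * Nat.choose t (t / 2)) * 4 := by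
          apply Nat.mul_le_mul_right; omega
      _ = 2 * (Nat.choose t (t / 2) * 4) := by ring
      _ ≤ 2 * 2 ^ t := by exact Nat.mul_le_mul_left 2 ih
      _ = 2 ^ (t + 1) := by rw [pow_succ]; ring

lemma key_ineq (t : ℕ) (ht : 3 ≤ t) :
    8 * (((t + 1) / 2) * Nat.choose t (t / 2)) ≤ (t + 3) * 2 ^ t := by
  rcases le_or_gt 9 t with h | h
  · have hc := central_le_pow t h
    calc 8 * (((t + 1) / 2) * Nat.choose t (t / 2))
        = (2 * ((t + 1) / 2)) * (Nat.choose t (t / 2) * 4) := by ring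
      _ ≤ (t + 1) * 2 ^ t := Nat.mul_le_mul (by omega) hc
      _ ≤ (t + 3) * 2 ^ t := Nat.mul_le_mul_right _ (by omega)
  · interval_cases t <;> decide

theorem stmt19 (t n : ℕ) (ht : 3 ≤ t) (hn : t + 1 ≤ n) :
    3 * ((t - 1) * 2 ^ (n - 2)) ≤
      4 * (t * 2 ^ (n - 2) - 2 ^ (n - t - 1) * (((t + 1) / 2) * Nat.choose t (t / 2))) := by
  set X := ((t + 1) / 2) * Nat.choose t (t / 2) with hX
  rw [Nat.mul_sub]
  apply Nat.le_sub_of_add_le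
  have hsplit : n - 2 = (n - t - 1) + (t - 1) := by omega
  have hpow : (2 : ℕ) ^ (n - 2) = 2 ^ (n - t - 1) * 2 ^ (t - 1) := by
    rw [hsplit, pow_add]
  have hmain : 4 * (2 ^ (n - t - 1) * X) ≤ (t + 3) * 2 ^ (n - 2) := by
    rw [hpow]
    have : 8 * X ≤ (t + 3) * 2 ^ t := key_ineq t ht
    have ht' : (2 : ℕ) ^ t = 2 * 2 ^ (t - 1) := by
      rw [← pow_succ']
      congr 1
      omega
    have h4X : 4 * X ≤ (t + 3) * 2 ^ (t - 1) := by
      have h2 : (t + 3) * 2 ^ t = 2 * ((t + 3) * 2 ^ (t - 1)) := by rw [ht']; ring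
      rw [h2] at this
      omega
    calc 4 * (2 ^ (n - t - 1) * X) = 2 ^ (n - t - 1) * (4 * X) := by ring
      _ ≤ 2 ^ (n - t - 1) * ((t + 3) * 2 ^ (t - 1)) := Nat.mul_le_mul_left _ h4X
      _ = (t + 3) * (2 ^ (n - t - 1) * 2 ^ (t - 1)) := by ring
  have heq : 3 * ((t - 1) * 2 ^ (n - 2)) + (t + 3) * 2 ^ (n - 2) = 4 * (t * 2 ^ (n - 2)) := by
    have h1 : t - 1 + 1 = t := by omega
    calc 3 * ((t - 1) * 2 ^ (n - 2)) + (t + 3) * 2 ^ (n - 2)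
        = (3 * (t - 1) + (t + 3)) * 2 ^ (n - 2) := by ring
      _ = (4 * t) * 2 ^ (n - 2) := by congr 1; omega
      _ = 4 * (t * 2 ^ (n - 2)) := by ring
  omega
end
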